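/- The substitution operator • on Lyndon words of length at least 2 over {0,1} is associative: for any three such Lyndon words r, s, t, one has (r • s) • t = r • (s • t). -/

import Mathlib

/-- The cyclic rotation of a binary word `c` by `i`: `c_{i+1}…c_m c_1…c_i`. -/
def rot (c : List Bool) (i : ℕ) : List Bool := c.drop i ++ c.take i

/-- The lexicographically largest cyclic rotation `L(s)` of `s`. -/
def maxRot (s : List Bool) : List Bool :=
  (List.range s.length).foldl (fun acc i => max acc (rot s i)) s

/-- The lexicographically smallest cyclic rotation `S(s)` of `s`. -/
def minRot (s : List Bool) : List Bool :=
  (List.range s.length).foldl (fun acc i => min acc (rot s i)) s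

/-- A binary word is Lyndon if every proper suffix is strictly lexicographically
greater than the prefix of the same length. -/
def IsLyndon (s : List Bool) : Prop :=
  ∀ i, 0 < i → i < s.length → s.take (s.length - i) < s.drop i

/-- The block emitted by the substitution `Φ_s` (with `a = L(s)`) for a pair of
consecutive digits: `00 ↦ a`, `01 ↦ a⁺`, `10 ↦ s⁻`, `11 ↦ s`. -/
def blk (s a : List Bool) : Bool → Bool → List Bool
  | false, false => a
  | false, true  => a.dropLast ++ [true]
  | true,  false => s.dropLast ++ [false]
  | true,  true  => s

/-- The substitution `Φ_s` on infinite sequences: the first block is `s⁻` if `r 0 = 0`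
and `L(s)⁺` if `r 0 = 1`; block `j+1` is determined by the pair `(r j, r (j+1))`. -/
def subst (s : List Bool) (r : ℕ → Bool) : ℕ → Bool := fun n =>
  let m := s.length
  let j := n / m
  (if j = 0 then blk s (maxRot s) (!(r 0)) (r 0)
   else blk s (maxRot s) (r (j - 1)) (r j)).getD (n % m) false

/-- The substitution `s • r` on finite words. -/
def substWord (s : List Bool) (r : List Bool) : List Bool :=
  match r with
  | [] => []
  | c :: _ =>
      blk s (maxRot s) (!c) c ++
        ((r.zip r.tail).map fun p => blk s (maxRot s) p.1 p.2).flatten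


/- ### Lex toolbox -/

lemma lt_iff_lex {a b : List Bool} : a < b ↔ List.Lex (·<·) a b := Iff.rfl

lemma lex_append_lt {p q : List Bool} (a b : List Bool) (hl : p.length = q.length)
    (h : p < q) : p ++ a < q ++ b := by
  induction p generalizing q with
  | nil =>
    cases q with
    | nil => exact absurd h (lt_irrefl _)
    | cons y q' => simp at hl
  | cons x p' ih =>
    cases q with
    | nil => simp at hl
    | cons y q' =>
      rw [lt_iff_lex] at h ⊢
      cases h with
      | rel hxy => exact List.Lex.rel hxy
      | cons h' => exact List.Lex.cons (ih (by simpa using hl) h')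

lemma append_lt_append_left {a b : List Bool} (u : List Bool) (h : a < b) :
    u ++ a < u ++ b := by
  induction u with
  | nil => exact h
  | cons x u' ih => exact List.Lex.cons ih

lemma lt_of_append_lt_append_left {a b : List Bool} (u : List Bool)
    (h : u ++ a < u ++ b) : a < b := by
  induction u with
  | nil => exact h
  | cons x u' ih =>
    rw [lt_iff_lex] at h
    cases h with
    | rel hxy => exact absurd hxy (lt_irrefl _)
    | cons h' => exact ih h'

lemma append_le_append_left {a b : List Bool} (u : List Bool) (h : a ≤ b) :
    u ++ a ≤ u ++ b := by
  rcases eq_or_lt_of_le h with rfl | h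
  · exact le_refl _
  · exact le_of_lt (append_lt_append_left u h)

lemma le_of_append_le_append {p q a b : List Bool} (hl : p.length = q.length)
    (h : p ++ a ≤ q ++ b) : p ≤ q := by
  by_contra hc
  push_neg at hc
  exact absurd h (not_le.mpr (lex_append_lt b a hl.symm hc))

lemma take_le_take {u v : List Bool} (k : ℕ) (hl : u.length = v.length) (h : u ≤ v) :
    u.take k ≤ v.take k := by
  by_contra hc
  push_neg at hc
  have : v < u := by
    have hv := (v.take_append_drop k).symm
    have hu := (u.take_append_drop k).symm
    rw [hv, hu]
    exact lex_append_lt _ _ (by simp [hl]) hc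
  exact absurd h (not_le.mpr this)

lemma sandwich {x z : List Bool} (hl : x.length = z.length + 1)
    (h1 : z ++ [false] ≤ x) (h2 : x ≤ z ++ [true]) :
    x = z ++ [false] ∨ x = z ++ [true] := by
  have hx : x ≠ [] := by intro h; rw [h] at hl; simp at hl
  have hdl : x.dropLast.length = z.length := by
    rw [List.length_dropLast, hl]; simp
  have hxd : x = x.dropLast ++ [x.getLast hx] := (List.dropLast_append_getLast hx).symm
  rcases lt_trichotomy x.dropLast z with h | h | h
  · exfalso
    have : x < z ++ [false] := by rw [hxd]; exact lex_append_lt _ _ hdl h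
    exact absurd h1 (not_le.mpr this)
  · rcases Bool.eq_false_or_eq_true (x.getLast hx) with hg | hg
    · right; rw [hxd, hg, h]
    · left; rw [hxd, hg, h]
  · exfalso
    have : z ++ [true] < x := by rw [hxd]; exact lex_append_lt _ _ hdl.symm h
    exact absurd h2 (not_le.mpr this)

lemma ge_replicate_true {w : List Bool} (h : List.replicate w.length true ≤ w) :
    w = List.replicate w.length true := by
  induction w with
  | nil => rfl
  | cons x w' ih =>
    simp only [List.length_cons, List.replicate_succ] at h ⊢
    cases x with
    | false =>
      exfalso
      exact absurd h (not_le.mpr (List.Lex.rel (by decide)))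
    | true =>
      have h' : List.replicate w'.length true ≤ w' := by
        rcases eq_or_lt_of_le h with he | hlt
        · exact le_of_eq (List.cons_injective he)
        · rw [lt_iff_lex] at hlt
          cases hlt with
          | rel hxy => exact absurd hxy (lt_irrefl _)
          | cons h' => exact le_of_lt h'
      rw [← ih h']

/- ### rot lemmas -/

lemma rot_length (c : List Bool) (i : ℕ) : (rot c i).length = c.length := by
  simp [rot]; omega

lemma rot_zero (c : List Bool) : rot c 0 = c := by simp [rot]

lemma rot_eq_rotate {c : List Bool} {i : ℕ} (h : i ≤ c.length) : rot c i = c.rotate i :=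
  (List.rotate_eq_drop_append_take h).symm

lemma rot_append (a b : List Bool) : rot (a ++ b) a.length = b ++ a := by
  simp [rot, List.take_left, List.drop_left]

lemma rot_rot {c : List Bool} {a b : ℕ} (h : a + b ≤ c.length) :
    rot (rot c a) b = rot c (a + b) := by
  rw [rot_eq_rotate (le_trans (Nat.le_add_right a b) h),
    rot_eq_rotate (by rw [List.length_rotate]; omega),
    List.rotate_rotate, rot_eq_rotate h]

/- ### foldl max lemmas -/

lemma foldl_max_init (l : List ℕ) (f : ℕ → List Bool) (b : List Bool) :
    b ≤ l.foldl (fun acc i => max acc (f i)) b := by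
  induction l generalizing b with
  | nil => exact le_refl _
  | cons x l ih => exact le_trans (le_max_left b (f x)) (ih _)

lemma foldl_max_mem (l : List ℕ) (f : ℕ → List Bool) (b : List Bool) :
    ∀ i ∈ l, f i ≤ l.foldl (fun acc i => max acc (f i)) b := by
  induction l generalizing b with
  | nil => intro i h; simp at h
  | cons x l ih =>
    intro i hi
    rcases List.mem_cons.mp hi with rfl | hi
    · exact le_trans (le_max_right b (f i)) (foldl_max_init _ _ _)
    · exact ih _ i hi

lemma foldl_max_eq (l : List ℕ) (f : ℕ → List Bool) (b : List Bool) :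
    l.foldl (fun acc i => max acc (f i)) b = b ∨
      ∃ i ∈ l, l.foldl (fun acc i => max acc (f i)) b = f i := by
  induction l generalizing b with
  | nil => exact Or.inl rfl
  | cons x l ih =>
    rcases ih (max b (f x)) with h | ⟨i, hi, h⟩
    · rcases max_cases b (f x) with ⟨he, _⟩ | ⟨he, _⟩
      · left; rw [List.foldl_cons, h, he]
      · right; exact ⟨x, List.mem_cons_self, by rw [List.foldl_cons, h, he]⟩
    · exact Or.inr ⟨i, List.mem_cons_of_mem _ hi, h⟩

/- ### maxRot basic -/

lemma le_maxRot (s : List Bool) : s ≤ maxRot s := foldl_max_init _ _ _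

lemma rot_le_maxRot (s : List Bool) {i : ℕ} (h : i ≤ s.length) : rot s i ≤ maxRot s := by
  rcases eq_or_lt_of_le h with rfl | h
  · have : rot s s.length = s := by simp [rot]
    rw [this]; exact le_maxRot s
  · exact foldl_max_mem _ _ _ i (List.mem_range.mpr h)

lemma rotate_le_maxRot (s : List Bool) (j : ℕ) (hn : 0 < s.length) :
    s.rotate j ≤ maxRot s := by
  rw [← List.rotate_mod, ← rot_eq_rotate (le_of_lt (Nat.mod_lt _ hn))]
  exact rot_le_maxRot s (le_of_lt (Nat.mod_lt _ hn))

lemma maxRot_eq_rot (s : List Bool) (hn : 0 < s.length) :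
    ∃ k, k < s.length ∧ maxRot s = rot s k := by
  rcases foldl_max_eq (List.range s.length) (rot s) s with h | ⟨i, hi, h⟩
  · exact ⟨0, hn, by rw [rot_zero]; exact h⟩
  · exact ⟨i, List.mem_range.mp hi, h⟩

lemma maxRot_length (s : List Bool) (hn : 0 < s.length) :
    (maxRot s).length = s.length := by
  obtain ⟨k, _, h⟩ := maxRot_eq_rot s hn
  rw [h, rot_length]

/- ### Lyndon basics -/

section Lyndon
variable {s : List Bool} (hL : IsLyndon s) (hs : 2 ≤ s.length)
include hL hs

lemma lyndon_head_tail : s = false :: s.tail ∧ s.dropLast ++ [true] = s := by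
  have hne : s ≠ [] := by intro h; rw [h] at hs; simp at hs
  have h1 := hL (s.length - 1) (by omega) (by omega)
  have he : s.length - (s.length - 1) = 1 := by omega
  rw [he] at h1
  have htake : s.take 1 = [s.head hne] := by
    cases s with
    | nil => simp at hs
    | cons a l => simp
  have hdrop : s.drop (s.length - 1) = [s.getLast hne] := by
    have h5 : s.drop (s.length - 1)
        = (s.dropLast ++ [s.getLast hne]).drop s.dropLast.length := by
      rw [List.dropLast_append_getLast hne]
      congr 1
      simp
    rw [h5, List.drop_left]
  rw [htake, hdrop] at h1
  obtain ⟨a, ha⟩ : ∃ a, s.head hne = a := ⟨_, rfl⟩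
  obtain ⟨b, hb⟩ : ∃ b, s.getLast hne = b := ⟨_, rfl⟩
  rw [ha, hb] at h1
  have hlt : a < b := by
    cases h1 with
    | rel h => exact h
    | cons h => exact absurd h (by exact List.not_lex_nil)
  have hh : s.head hne = false := by
    rw [ha]; revert hlt; cases a <;> cases b <;> decide
  have hg : s.getLast hne = true := by
    rw [hb]; revert hlt; cases a <;> cases b <;> decide
  constructor
  · conv_lhs => rw [← List.cons_head_tail hne]
    rw [hh]
  · conv_rhs => rw [← List.dropLast_append_getLast hne]
    rw [hg]

lemma lyndon_lt_rot {i : ℕ} (h1 : 0 < i) (h2 : i < s.length) : s < rot s i := by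
  have h := hL i h1 h2
  conv_lhs => rw [← List.take_append_drop (s.length - i) s]
  rw [rot]
  exact lex_append_lt _ _ (by simp only [List.length_take, List.length_drop]; omega) h

lemma lyndon_le_rotate (j : ℕ) : s ≤ s.rotate j := by
  have hn : 0 < s.length := by omega
  rw [← List.rotate_mod, ← rot_eq_rotate (le_of_lt (Nat.mod_lt _ hn))]
  rcases Nat.eq_zero_or_pos (j % s.length) with h | h
  · rw [h, rot_zero]
  · exact le_of_lt (lyndon_lt_rot hL hs h (Nat.mod_lt _ hn))

lemma lyndon_not_bordered {d : ℕ} (h1 : 0 < d) (h2 : d < s.length) : rot s d ≠ s := by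
  intro h
  have := congrArg (List.take (s.length - d)) h
  rw [rot] at this
  rw [List.take_append_of_le_length (by simp only [List.length_drop]; omega),
    List.take_of_length_le (by simp)] at this
  exact absurd (hL d h1 h2) (by rw [this]; exact lt_irrefl _)

/- ### maxRot of Lyndon -/

lemma maxRot_cons : maxRot s = true :: (maxRot s).tail := by
  have hn : 0 < s.length := by omega
  obtain ⟨hhd, hlast⟩ := lyndon_head_tail hL hs
  have hdl : s.dropLast.length = s.length - 1 := by simp
  have hrot : rot s (s.length - 1) = true :: s.dropLast := by
    nth_rewrite 1 [← hlast]
    have hidx : s.length - 1 = s.dropLast.length := by simp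
    rw [hidx, rot_append]
    rfl
  have hge : true :: s.dropLast ≤ maxRot s := by
    rw [← hrot]; exact rot_le_maxRot s (by omega)
  have hMne : maxRot s ≠ [] := by
    intro h
    have := maxRot_length s hn
    rw [h] at this; simp at this; omega
  cases hM : maxRot s with
  | nil => exact absurd hM hMne
  | cons c M' =>
    cases c with
    | false =>
      exfalso
      rw [hM] at hge
      exact absurd hge (not_le.mpr (List.Lex.rel (by decide)))
    | true => rfl

lemma maxRot_getLast : (maxRot s).dropLast ++ [false] = maxRot s := by
  have hn : 0 < s.length := by omega
  set n := s.length with hn'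
  set MM := maxRot s with hS
  have hSlen : MM.length = n := maxRot_length s hn
  have hSne : MM ≠ [] := by intro h; rw [h] at hSlen; simp at hSlen; omega
  obtain ⟨k, hk, hkeq⟩ := maxRot_eq_rot s hn
  have hSrot : MM = s.rotate k := by rw [hS, hkeq, rot_eq_rotate (le_of_lt hk)]
  rcases Bool.eq_false_or_eq_true (MM.getLast hSne) with hg | hg
  case inr =>
    conv_rhs => rw [← List.dropLast_append_getLast hSne]
    rw [hg]
  case inl =>
    exfalso
    -- MM would be all-true
    have hR : rot MM (n - 1) = true :: MM.take (n - 1) := by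
      have hdl : MM.dropLast.length = n - 1 := by simp [hSlen]
      nth_rewrite 1 [← List.dropLast_append_getLast hSne]
      rw [show n - 1 = MM.dropLast.length from hdl.symm, rot_append, hg]
      simp [List.dropLast_eq_take, hSlen, hdl]
    have hRle : rot MM (n - 1) ≤ MM := by
      rw [rot_eq_rotate (by omega : n - 1 ≤ MM.length), hSrot, List.rotate_rotate]
      rw [hSrot] at hS
      exact le_of_le_of_eq (rotate_le_maxRot s _ hn) hS.symm
    have key : ∀ j, j ≤ n → MM.take j = List.replicate j true := by
      intro j
      induction j with
      | zero => intro; simp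
      | succ j ih =>
        intro hj
        have hij := ih (by omega)
        have h1 : (rot MM (n - 1)).take (j + 1) ≤ MM.take (j + 1) :=
          take_le_take _ (by rw [rot_length]) hRle
        rw [hR] at h1
        have h2 : (true :: MM.take (n - 1)).take (j + 1)
            = List.replicate (j + 1) true := by
          rw [List.take_succ_cons, List.take_take, min_eq_left (by omega : j ≤ n - 1), hij]
          rfl
        rw [List.take_succ_cons, List.take_take, min_eq_left (by omega : j ≤ n - 1), hij] at h1
        have h3 : List.replicate (j + 1) true ≤ MM.take (j + 1) := by
          rw [List.replicate_succ]; exact h1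
        have h4 : (MM.take (j + 1)).length = j + 1 := by
          rw [List.length_take]; omega
        have := ge_replicate_true (by rw [h4]; exact h3)
        rw [h4] at this
        exact this
    have hall : MM = List.replicate n true := by
      have := key n (le_refl n)
      rwa [List.take_of_length_le (le_of_eq hSlen)] at this
    have hfmem : false ∈ MM := by
      rw [hSrot]
      apply (List.rotate_perm s k).mem_iff.mpr
      obtain ⟨hhd, _⟩ := lyndon_head_tail hL hs
      rw [hhd]; exact List.mem_cons_self
    rw [hall] at hfmem
    exact absurd (List.eq_of_mem_replicate hfmem) (by decide)

lemma maxRot_no_border {d : ℕ} (h1 : 0 < d) (h2 : d < s.length) :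
    (maxRot s).take (s.length - d) ≠ (maxRot s).drop d := by
  intro heq
  have hn : 0 < s.length := by omega
  set n := s.length with hn'
  set MM := maxRot s with hS
  have hSlen : MM.length = n := maxRot_length s hn
  obtain ⟨k, hk, hkeq⟩ := maxRot_eq_rot s hn
  have hSrot : MM = s.rotate k := by rw [hS, hkeq, rot_eq_rotate (le_of_lt hk)]
  have hrotle : ∀ j, rot MM j ≤ MM → True := fun _ _ => trivial
  have hrot_le : ∀ j, j ≤ n → rot MM j ≤ MM := by
    intro j hj
    rw [rot_eq_rotate (by omega : j ≤ MM.length), hSrot, List.rotate_rotate]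
    rw [hSrot] at hS
    exact le_of_le_of_eq (rotate_le_maxRot s _ hn) hS.symm
  set u := MM.take (n - d) with hu
  set p := MM.take d with hp
  set q := MM.drop (n - d) with hq
  have hS1 : MM = p ++ MM.drop d := by rw [hp]; exact (List.take_append_drop _ _).symm
  have hS2 : MM = u ++ q := by rw [hu, hq]; exact (List.take_append_drop _ _).symm
  have hrd : rot MM d = u ++ p := by rw [rot, ← heq, hu, hp]
  have hrnd : rot MM (n - d) = q ++ u := by rw [rot, hq, hu]
  have hpq : p ≤ q := by
    have := hrot_le d (by omega)
    rw [hrd] at this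
    conv_rhs at this => rw [hS2]
    by_contra hc
    push_neg at hc
    exact absurd this (not_le.mpr (append_lt_append_left u hc))
  have hqp : q ≤ p := by
    have := hrot_le (n - d) (by omega)
    rw [hrnd] at this
    conv_rhs at this => rw [hS1, ← heq]
    exact le_of_append_le_append (by rw [hq, hp]; simp; omega) this
  have hpq' : p = q := le_antisymm hpq hqp
  have hfix : rot MM d = MM := by rw [hrd, hpq', ← hS2]
  -- transfer to s
  have hsrot : s = MM.rotate (n - k) := by
    rw [hSrot, List.rotate_rotate, show k + (n - k) = n from by omega, hn']
    exact (List.rotate_length s).symm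
  have hsfix : s.rotate d = s := by
    have h5 : MM.rotate d = MM := by
      rw [← rot_eq_rotate (by omega : d ≤ MM.length)]
      exact hfix
    calc s.rotate d = (MM.rotate (n - k)).rotate d := by rw [← hsrot]
      _ = MM.rotate (n - k + d) := List.rotate_rotate _ _ _
      _ = MM.rotate (d + (n - k)) := by rw [Nat.add_comm]
      _ = (MM.rotate d).rotate (n - k) := (List.rotate_rotate _ _ _).symm
      _ = MM.rotate (n - k) := by rw [h5]
      _ = s := hsrot.symm
  have : rot s d = s := by rw [rot_eq_rotate (by omega : d ≤ s.length), hsfix]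
  exact absurd this (lyndon_not_bordered hL hs h1 h2)

end Lyndon

/- ### lastD and body -/

def lastD (x : Bool) : List Bool → Bool
  | [] => x
  | y :: w => lastD y w

@[simp] lemma lastD_nil (x : Bool) : lastD x [] = x := rfl
@[simp] lemma lastD_cons (x y : Bool) (w : List Bool) :
    lastD x (y :: w) = lastD y w := rfl

lemma lastD_append (x : Bool) (u v : List Bool) :
    lastD x (u ++ v) = lastD (lastD x u) v := by
  induction u generalizing x with
  | nil => rfl
  | cons y u ih => simp [ih]

lemma lastD_concat (x c : Bool) (w : List Bool) : lastD x (w ++ [c]) = c := by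
  rw [lastD_append]; rfl

def body (X LX : List Bool) : Bool → List Bool → List Bool
  | _, [] => []
  | x, y :: w => blk X LX x y ++ body X LX y w

@[simp] lemma body_nil (X LX : List Bool) (x : Bool) : body X LX x [] = [] := rfl
@[simp] lemma body_cons (X LX : List Bool) (x y : Bool) (w : List Bool) :
    body X LX x (y :: w) = blk X LX x y ++ body X LX y w := rfl

lemma substWord_eq_body (X : List Bool) (c : Bool) (w : List Bool) :
    substWord X (c :: w) = body X (maxRot X) (!c) (c :: w) := by
  have aux : ∀ (w : List Bool) (y : Bool),
      (((y :: w).zip w).map fun p => blk X (maxRot X) p.1 p.2).flatten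
        = body X (maxRot X) y w := by
    intro w
    induction w with
    | nil => intro y; rfl
    | cons z w ih =>
      intro y
      simp only [List.zip_cons_cons, List.map_cons, List.flatten_cons, body_cons]
      rw [ih]
  rw [substWord, body_cons]
  simp only [List.tail_cons]
  rw [aux]

lemma body_append (X LX : List Bool) (x : Bool) (u v : List Bool) :
    body X LX x (u ++ v) = body X LX x u ++ body X LX (lastD x u) v := by
  induction u generalizing x with
  | nil => rfl
  | cons y u ih => simp [ih, List.append_assoc]

/- ### blk lemmas over a Lyndon word -/

section Blk
variable {r : List Bool} (hLr : IsLyndon r) (hr : 2 ≤ r.length)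
include hLr hr

lemma blk_length (x y : Bool) : (blk r (maxRot r) x y).length = r.length := by
  have hA : (maxRot r).length = r.length := maxRot_length r (by omega)
  cases x <;> cases y <;>
    simp [blk, List.length_dropLast, hA] <;> omega

lemma blk_shape (x y : Bool) : ∃ z, blk r (maxRot r) x y = (!x) :: z := by
  obtain ⟨hhd, hlast⟩ := lyndon_head_tail hLr hr
  have hAhd := maxRot_cons hLr hr
  have hAlen : (maxRot r).length = r.length := maxRot_length r (by omega)
  have hrshape : ∃ l, r = false :: l ∧ l ≠ [] := by
    refine ⟨r.tail, hhd, ?_⟩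
    intro h
    rw [h] at hhd
    rw [hhd] at hr; simp at hr
  have hAshape : ∃ l, maxRot r = true :: l ∧ l ≠ [] := by
    refine ⟨(maxRot r).tail, hAhd, ?_⟩
    intro h
    rw [h] at hAhd
    rw [hAhd] at hAlen; simp at hAlen; omega
  obtain ⟨l, hl, hlne⟩ := hrshape
  obtain ⟨la, hla, hlane⟩ := hAshape
  obtain ⟨b, l', rfl⟩ : ∃ b l', l = b :: l' := by cases l with
    | nil => exact absurd rfl hlne
    | cons b l' => exact ⟨b, l', rfl⟩
  obtain ⟨ba, la', rfl⟩ : ∃ b l', la = b :: l' := by cases la with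
    | nil => exact absurd rfl hlane
    | cons b l' => exact ⟨b, l', rfl⟩
  cases x <;> cases y <;> simp only [blk, Bool.not_false, Bool.not_true]
  · exact ⟨(maxRot r).tail, hAhd⟩
  · rw [hla, List.dropLast_cons₂]
    exact ⟨_, rfl⟩
  · rw [hl, List.dropLast_cons₂]
    exact ⟨_, rfl⟩
  · exact ⟨r.tail, hhd⟩

lemma blk_concat (x y : Bool) :
    blk r (maxRot r) x y = (blk r (maxRot r) x y).dropLast ++ [y] := by
  obtain ⟨hhd, hlast⟩ := lyndon_head_tail hLr hr
  have hAlast := maxRot_getLast hLr hr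
  cases x <;> cases y
  · exact hAlast.symm
  · show (maxRot r).dropLast ++ [true]
      = ((maxRot r).dropLast ++ [true]).dropLast ++ [true]
    rw [List.dropLast_concat]
  · show r.dropLast ++ [false] = (r.dropLast ++ [false]).dropLast ++ [false]
    rw [List.dropLast_concat]
  · exact hlast.symm

lemma blk_flip (x c : Bool) :
    (blk r (maxRot r) x c).dropLast ++ [!c] = blk r (maxRot r) x (!c) := by
  obtain ⟨hhd, hlast⟩ := lyndon_head_tail hLr hr
  have hAlast := maxRot_getLast hLr hr
  cases x <;> cases c
  · show (maxRot r).dropLast ++ [true] = (maxRot r).dropLast ++ [true]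
    rfl
  · show ((maxRot r).dropLast ++ [true]).dropLast ++ [false] = maxRot r
    rw [List.dropLast_concat]; exact hAlast
  · show (r.dropLast ++ [false]).dropLast ++ [true] = r
    rw [List.dropLast_concat]; exact hlast
  · show r.dropLast ++ [false] = r.dropLast ++ [false]
    rfl

lemma blk_dropLast (x y : Bool) :
    (blk r (maxRot r) x y).dropLast = (blk r (maxRot r) x true).dropLast := by
  cases y
  · have := blk_flip hLr hr x true
    rw [show (!true) = false from rfl] at this
    rw [← this, List.dropLast_concat]
  · rfl

lemma blk_lt (x : Bool) : blk r (maxRot r) x false < blk r (maxRot r) x true := by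
  have h1 := blk_concat hLr hr x false
  have h2 := blk_concat hLr hr x true
  rw [h1, h2, blk_dropLast hLr hr x false]
  exact append_lt_append_left _ (List.Lex.rel (by decide))

lemma blk_take_eq {d : ℕ} (hd : d ≤ r.length - 1) (x y y' : Bool) :
    (blk r (maxRot r) x y).take d = (blk r (maxRot r) x y').take d := by
  have key : ∀ c, (blk r (maxRot r) x c).take d
      = (blk r (maxRot r) x true).dropLast.take d := by
    intro c
    have h1 := blk_concat hLr hr x c
    have h2 : (blk r (maxRot r) x c).dropLast.length = r.length - 1 := by
      rw [List.length_dropLast, blk_length hLr hr]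
    conv_lhs => rw [h1]
    rw [List.take_append_of_le_length (by omega), blk_dropLast hLr hr]
  rw [key y, key y']

lemma blk_le_maxRot (x y : Bool) (hxy : ¬(x = false ∧ y = true)) :
    blk r (maxRot r) x y ≤ maxRot r := by
  have h1 : blk r (maxRot r) true true ≤ maxRot r := le_maxRot r
  cases x <;> cases y
  · exact le_refl _
  · exact absurd ⟨rfl, rfl⟩ hxy
  · exact le_trans (le_of_lt (blk_lt hLr hr true)) h1
  · exact h1

lemma rotA_le {j : ℕ} (hj : j ≤ r.length) : rot (maxRot r) j ≤ maxRot r := by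
  have hm0 : 0 < r.length := by omega
  obtain ⟨k, hk, hkeq⟩ := maxRot_eq_rot r hm0
  have hA1 : maxRot r = r.rotate k := by rw [hkeq, rot_eq_rotate (le_of_lt hk)]
  have hAlen : (maxRot r).length = r.length := maxRot_length r hm0
  calc rot (maxRot r) j = (maxRot r).rotate j := rot_eq_rotate (by omega)
    _ = (r.rotate k).rotate j := by rw [← hA1]
    _ = r.rotate (k + j) := List.rotate_rotate _ _ _
    _ ≤ maxRot r := rotate_le_maxRot r _ hm0

lemma r_le_rotA {j : ℕ} (hj : j ≤ r.length) : r ≤ rot (maxRot r) j := by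
  have hm0 : 0 < r.length := by omega
  obtain ⟨k, hk, hkeq⟩ := maxRot_eq_rot r hm0
  have hA1 : maxRot r = r.rotate k := by rw [hkeq, rot_eq_rotate (le_of_lt hk)]
  have hAlen : (maxRot r).length = r.length := maxRot_length r hm0
  have : rot (maxRot r) j = r.rotate (k + j) := by
    calc rot (maxRot r) j = (maxRot r).rotate j := rot_eq_rotate (by omega)
      _ = (r.rotate k).rotate j := by rw [← hA1]
      _ = r.rotate (k + j) := List.rotate_rotate _ _ _
  rw [this]
  exact lyndon_le_rotate hLr hr _

lemma window_le (x y z : Bool) {d : ℕ} (h0 : 0 < d) (hdm : d < r.length) :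
    (blk r (maxRot r) x y).drop d ++ (blk r (maxRot r) y z).take d ≤ maxRot r := by
  obtain ⟨hhd, hlast⟩ := lyndon_head_tail hLr hr
  have hAlast := maxRot_getLast hLr hr
  have hAlen : (maxRot r).length = r.length := maxRot_length r (by omega)
  have hd1 : d ≤ r.length - 1 := by omega
  have hdl : r.dropLast.length = r.length - 1 := by simp
  have hdla : (maxRot r).dropLast.length = r.length - 1 := by simp [hAlen]
  cases y
  · -- second block starts like maxRot r
    have htk : (blk r (maxRot r) false z).take d = (maxRot r).take d :=
      blk_take_eq hLr hr hd1 false z false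
    rw [htk]
    cases x
    · -- A.drop d ++ A.take d = rot A d
      show rot (maxRot r) d ≤ maxRot r
      exact rotA_le hLr hr (by omega)
    · -- rm.drop d ++ A.take d < rot r d
      show (r.dropLast ++ [false]).drop d ++ (maxRot r).take d ≤ maxRot r
      have e1 : (r.dropLast ++ [false]).drop d = r.dropLast.drop d ++ [false] :=
        List.drop_append_of_le_length (by omega)
      have e2 : r.drop d = r.dropLast.drop d ++ [true] := by
        conv_lhs => rw [← hlast]
        exact List.drop_append_of_le_length (by omega)
      have hlt : (r.dropLast.drop d ++ [false]) ++ (maxRot r).take d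
          < (r.dropLast.drop d ++ [true]) ++ r.take d := by
        refine lex_append_lt _ _ (by simp) ?_
        exact append_lt_append_left _ (List.Lex.rel (by decide))
      rw [e1]
      refine le_of_lt (lt_of_lt_of_le hlt ?_)
      rw [← e2]
      exact rot_le_maxRot r (by omega)
  · -- second block starts like r
    have htk : (blk r (maxRot r) true z).take d = r.take d :=
      blk_take_eq hLr hr hd1 true z true
    rw [htk]
    cases x
    · -- hard case: ap.drop d ++ r.take d ≤ A
      show ((maxRot r).dropLast ++ [true]).drop d ++ r.take d ≤ maxRot r
      by_contra hc
      push_neg at hc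
      set m := r.length with hm
      set A := maxRot r with hA
      set z' := A.dropLast.drop d with hz'
      have hz'len : z'.length = m - 1 - d := by rw [hz', List.length_drop, hdla]
      have e1 : (A.dropLast ++ [true]).drop d = z' ++ [true] :=
        List.drop_append_of_le_length (by omega)
      have e2 : A.drop d = z' ++ [false] := by
        conv_lhs => rw [← hAlast]
        exact List.drop_append_of_le_length (by omega)
      rw [e1] at hc
      set x' := A.take (m - d) with hx'
      have hx'len : x'.length = m - d := by
        rw [hx', List.length_take]; omega
      -- lower bound for x'
      have hlow : z' ++ [false] ≤ x' := by
        have h1 : rot A d ≤ A := rotA_le hLr hr (by omega)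
        have h2 : rot A d = (z' ++ [false]) ++ A.take d := by
          rw [rot, e2]
        have h3 : A = x' ++ A.drop (m - d) := by
          rw [hx']
          conv_lhs => rw [← List.take_append_drop (m - d) A]
        rw [h2, h3] at h1
        exact le_of_append_le_append
          (by simp only [List.length_append, List.length_cons, List.length_nil,
            hz'len, hx'len]; omega) h1
      -- upper bound for x'
      have hup : x' ≤ z' ++ [true] := by
        have h1 : A.take (m - d) ≤ ((z' ++ [true]) ++ r.take d).take (m - d) :=
          take_le_take _ (by simp only [List.length_append, List.length_cons,
            List.length_nil, List.length_take, hz'len, hAlen]; omega) (le_of_lt hc)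
        have h2 : ((z' ++ [true]) ++ r.take d).take (m - d) = z' ++ [true] :=
          List.take_left' (by simp only [List.length_append, List.length_cons,
            List.length_nil, hz'len]; omega)
        rw [h2] at h1
        exact h1
      rcases sandwich (by rw [hx'len, hz'len]; omega) hlow hup with hx | hx
      · -- border: contradiction
        have : A.take (m - d) = A.drop d := by rw [← hx', hx, ← e2]
        exact absurd this (maxRot_no_border hLr hr h0 hdm)
      · -- A.drop (m-d) < r.take d, contradiction with minimality of r
        have h3 : A = x' ++ A.drop (m - d) := by
          rw [hx']
          conv_lhs => rw [← List.take_append_drop (m - d) A]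
        have hc2 : x' ++ A.drop (m - d) < x' ++ r.take d := by
          rw [← h3, hx]
          exact hc
        have hlt' : A.drop (m - d) < r.take d := lt_of_append_lt_append_left _ hc2
        have h4 : rot A (m - d) = A.drop (m - d) ++ x' := by rw [rot, hx']
        have h5 : r ≤ rot A (m - d) := r_le_rotA hLr hr (by omega)
        have h6 : r.take d ≤ (rot A (m - d)).take d :=
          take_le_take d (by rw [rot_length, hAlen]) h5
        have h7 : (rot A (m - d)).take d = A.drop (m - d) := by
          rw [h4, List.take_left' (by simp only [List.length_drop, hAlen]; omega)]
        rw [h7] at h6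
        exact absurd h6 (not_le.mpr hlt')
    · show r.drop d ++ r.take d ≤ maxRot r
      exact rot_le_maxRot r (by omega)

end Blk


lemma lastD_irrel {u : List Bool} (hu : u ≠ []) (a b : Bool) :
    lastD a u = lastD b u := by
  cases u with
  | nil => exact absurd rfl hu
  | cons y w => rfl

lemma rot_append_small {a b : List Bool} {d : ℕ} (hd : d ≤ a.length) :
    rot (a ++ b) d = a.drop d ++ (b ++ a.take d) := by
  rw [rot, List.drop_append_of_le_length hd, List.take_append_of_le_length hd,
    List.append_assoc]

section Main
variable {r s : List Bool} (hLr : IsLyndon r) (hr : 2 ≤ r.length)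
include hLr hr

lemma body_length (x : Bool) (w : List Bool) :
    (body r (maxRot r) x w).length = r.length * w.length := by
  induction w generalizing x with
  | nil => simp
  | cons y w ih =>
    simp only [body_cons, List.length_append, List.length_cons,
      blk_length hLr hr, ih]
    ring

lemma body_mono_lt {u v : List Bool} (hl : u.length = v.length) (hlt : u < v)
    (x : Bool) : body r (maxRot r) x u < body r (maxRot r) x v := by
  induction u generalizing v x with
  | nil =>
    cases v with
    | nil => exact absurd hlt (lt_irrefl _)
    | cons z v' => simp at hl
  | cons y u' ih =>
    cases v with
    | nil => simp at hl
    | cons z v' =>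
      cases hlt with
      | rel hyz =>
        have hy : y = false := by revert hyz; cases y <;> cases z <;> decide
        have hz : z = true := by revert hyz; cases y <;> cases z <;> decide
        subst hy; subst hz
        simp only [body_cons]
        exact lex_append_lt _ _ (by rw [blk_length hLr hr, blk_length hLr hr])
          (blk_lt hLr hr x)
      | cons h' =>
        simp only [body_cons]
        exact append_lt_append_left _ (ih (by simpa using hl) h' y)

lemma body_mono_le {u v : List Bool} (hl : u.length = v.length) (hle : u ≤ v)
    (x : Bool) : body r (maxRot r) x u ≤ body r (maxRot r) x v := by
  rcases eq_or_lt_of_le hle with rfl | hlt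
  · exact le_refl _
  · exact le_of_lt (body_mono_lt hLr hr hl hlt x)

variable (hLs : IsLyndon s) (hs : 2 ≤ s.length)
include hLs hs

omit hLr hr in
lemma lastD_s : lastD true s = true := by
  obtain ⟨_, hlast⟩ := lyndon_head_tail hLs hs
  rw [← hlast, lastD_concat]

omit hLr hr in
lemma lastD_maxRot_s : lastD true (maxRot s) = false := by
  rw [← maxRot_getLast hLs hs, lastD_concat]

lemma rot_body_aligned {k : ℕ} (hk : k < s.length) :
    rot (body r (maxRot r) true s) (r.length * k)
      = body r (maxRot r) (lastD true (rot s k)) (rot s k) := by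
  rcases Nat.eq_zero_or_pos k with rfl | hk0
  · rw [Nat.mul_zero, rot_zero, rot_zero, lastD_s hLs hs]
  · obtain ⟨hshd, hslast⟩ := lyndon_head_tail hLs hs
    set u := s.take k with hu
    set v := s.drop k with hv
    have hulen : u.length = k := by rw [hu, List.length_take]; omega
    have hune : u ≠ [] := by
      intro h; rw [h] at hulen; simp at hulen; omega
    have hvne : v ≠ [] := by
      intro h
      have : v.length = 0 := by rw [h]; rfl
      rw [hv, List.length_drop] at this; omega
    have hsuv : s = u ++ v := (List.take_append_drop k s).symm
    have hrotk : rot s k = v ++ u := rfl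
    -- v ends with true
    have hvlast : lastD (lastD true u) v = true := by
      have : v = s.dropLast.drop k ++ [true] := by
        rw [hv]
        conv_lhs => rw [← hslast]
        exact List.drop_append_of_le_length (by simp; omega)
      rw [this, lastD_concat]
    -- LHS
    have hbody : body r (maxRot r) true s
        = body r (maxRot r) true u ++ body r (maxRot r) (lastD true u) v := by
      conv_lhs => rw [hsuv]
      exact body_append _ _ _ _ _
    have hblen : (body r (maxRot r) true u).length = r.length * k := by
      rw [body_length hLr hr, hulen]
    rw [hbody, ← hblen, rot_append]
    -- RHS
    rw [hrotk]
    have hL1 : lastD true (v ++ u) = lastD true u := by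
      rw [lastD_append]
      exact lastD_irrel hune _ _
    rw [body_append, hL1, hvlast]

lemma body_le_max {σ : List Bool} (hσlen : σ.length = s.length)
    (hσle : σ ≤ maxRot s) :
    body r (maxRot r) (lastD true σ) σ
      ≤ body r (maxRot r) (lastD true (maxRot s)) (maxRot s) := by
  have hSgcons := maxRot_cons hLs hs
  have hSglen : (maxRot s).length = s.length := maxRot_length s (by omega)
  have hLD := lastD_maxRot_s hLs hs
  obtain ⟨y, σ', rfl⟩ : ∃ y σ', σ = y :: σ' := by
    cases σ with
    | nil => rw [← hσlen] at hs; simp at hs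
    | cons y σ' => exact ⟨y, σ', rfl⟩
  rw [hLD]
  conv_rhs => rw [hSgcons]
  by_cases hcase : lastD true (y :: σ') = false ∧ y = true
  · obtain ⟨h1, h2⟩ := hcase
    subst h2
    rw [h1]
    simp only [body_cons]
    apply append_le_append_left
    rcases eq_or_lt_of_le hσle with heq | hlt
    · have hσ' : σ' = (maxRot s).tail := by
        rw [hSgcons] at heq
        exact (List.cons.injEq _ _ _ _).mp heq |>.2
      rw [hσ']
    · rw [hSgcons] at hlt
      cases hlt with
      | rel habs => exact absurd habs (lt_irrefl _)
      | cons h' =>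
        apply body_mono_le hLr hr ?_ (le_of_lt h')
        have h9 := congrArg List.length hSgcons
        simp only [List.length_cons] at h9
        simp only [List.length_cons] at hσlen
        omega
  · -- first block strictly smaller
    simp only [body_cons]
    have hb1 : blk r (maxRot r) (lastD true (y :: σ')) y ≤ maxRot r :=
      blk_le_maxRot hLr hr _ _ hcase
    have hb2 : maxRot r < blk r (maxRot r) false true := blk_lt hLr hr false
    refine le_of_lt (lex_append_lt _ _ ?_ (lt_of_le_of_lt hb1 hb2))
    rw [blk_length hLr hr, blk_length hLr hr]

theorem maxRot_substWord :
    maxRot (substWord r s) = substWord r (maxRot s) := by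
  obtain ⟨hshd, hslast⟩ := lyndon_head_tail hLs hs
  have hSgcons := maxRot_cons hLs hs
  have hSglen : (maxRot s).length = s.length := maxRot_length s (by omega)
  have hLD := lastD_maxRot_s hLs hs
  set m := r.length with hm
  set n := s.length with hn
  -- substWord r s = body true s
  have hW : substWord r s = body r (maxRot r) true s := by
    conv_lhs => rw [hshd]
    rw [substWord_eq_body, ← hshd]
    rfl
  -- substWord r (maxRot s) = M
  set M := body r (maxRot r) (lastD true (maxRot s)) (maxRot s) with hM
  have hMW : substWord r (maxRot s) = M := by
    conv_lhs => rw [hSgcons]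
    rw [substWord_eq_body, ← hSgcons, hM, hLD]
    rfl
  have hWlen : (substWord r s).length = m * n := by
    rw [hW, body_length hLr hr]
  have hWpos : 0 < (substWord r s).length := by
    rw [hWlen]
    have : 0 < m := by omega
    have : 0 < n := by omega
    positivity
  refine le_antisymm ?_ ?_
  · -- maxRot W ≤ M
    obtain ⟨i, hi, hieq⟩ := maxRot_eq_rot (substWord r s) hWpos
    rw [hWlen] at hi
    set d := i % m with hd
    set k := i / m with hk
    have hm0 : 0 < m := by omega
    have hdm : d < m := Nat.mod_lt _ hm0
    have hkn : k < n := by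
      rw [hk]
      rw [Nat.div_lt_iff_lt_mul hm0]
      calc i < m * n := hi
        _ = n * m := Nat.mul_comm _ _
    have hikd : i = m * k + d := by
      rw [hk, hd]
      exact (Nat.div_add_mod i m).symm
    have hal := rot_body_aligned hLr hr hLs hs hkn
    rcases Nat.eq_zero_or_pos d with hd0 | hd0
    · -- aligned
      rw [hieq, hikd, hd0, Nat.add_zero, hW, hMW, hM, hal]
      refine body_le_max hLr hr hLs hs (by rw [rot_length]) ?_
      exact rot_le_maxRot s (by omega)
    · -- non-aligned: strictly less
      rw [hieq, hikd, hW, hMW]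
      have hsum : m * k + d ≤ m * n := by
        calc m * k + d ≤ m * k + m := by omega
          _ = m * (k + 1) := by ring
          _ ≤ m * n := Nat.mul_le_mul_left m hkn
      rw [← rot_rot (by rw [body_length hLr hr, ← hn]; exact hsum), hal]
      set σ := rot s k with hσ
      have hσlen : σ.length = n := by rw [hσ, rot_length]
      obtain ⟨y, z, σ'', hσs⟩ : ∃ y z σ'', σ = y :: z :: σ'' := by
        rcases σ with _ | ⟨y, _ | ⟨z, σ''⟩⟩
        · exfalso; simp only [List.length_nil] at hσlen; omega
        · exfalso; simp only [List.length_cons, List.length_nil] at hσlen; omega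
        · exact ⟨y, z, σ'', rfl⟩
      set xσ := lastD true σ with hxσ
      have hbodyσ : body r (maxRot r) xσ σ
          = blk r (maxRot r) xσ y ++ (blk r (maxRot r) y z ++ body r (maxRot r) z σ'') := by
        rw [hσs]; rfl
      have hblk1 : (blk r (maxRot r) xσ y).length = m := blk_length hLr hr _ _
      have hrot : rot (body r (maxRot r) xσ σ) d
          = ((blk r (maxRot r) xσ y).drop d ++ (blk r (maxRot r) y z).take d)
            ++ ((blk r (maxRot r) y z).drop d
              ++ (body r (maxRot r) z σ'' ++ (blk r (maxRot r) xσ y).take d)) := by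
        rw [hbodyσ, rot_append_small (by rw [hblk1]; omega)]
        conv_lhs =>
          rw [show blk r (maxRot r) y z ++ body r (maxRot r) z σ''
            = ((blk r (maxRot r) y z).take d ++ (blk r (maxRot r) y z).drop d)
              ++ body r (maxRot r) z σ'' from by rw [List.take_append_drop]]
        simp only [List.append_assoc]
      have hwin : (blk r (maxRot r) xσ y).drop d ++ (blk r (maxRot r) y z).take d
          ≤ maxRot r := window_le hLr hr xσ y z hd0 hdm
      have hwinlt : (blk r (maxRot r) xσ y).drop d ++ (blk r (maxRot r) y z).take d
          < blk r (maxRot r) false true :=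
        lt_of_le_of_lt hwin (blk_lt hLr hr false)
      have hMdec : M = blk r (maxRot r) false true
          ++ body r (maxRot r) true (maxRot s).tail := by
        rw [hM, hLD]
        conv_lhs => rw [hSgcons]
        rfl
      rw [hrot, hM] at *
      rw [hMdec]
      refine le_of_lt (lex_append_lt _ _ ?_ hwinlt)
      rw [blk_length hLr hr]
      simp only [List.length_append, List.length_drop, List.length_take, hblk1,
        blk_length hLr hr]
      omega
  · -- M ≤ maxRot W
    obtain ⟨k₀, hk₀, hk₀eq⟩ := maxRot_eq_rot s (by omega)
    have hal := rot_body_aligned hLr hr hLs hs hk₀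
    rw [← hk₀eq] at hal
    rw [hMW, hM, ← hal, ← hW]
    apply rot_le_maxRot
    rw [hWlen]
    exact Nat.mul_le_mul_left m (le_of_lt hk₀)

omit hLs hs in
lemma body_flip (x c : Bool) (w : List Bool) :
    (body r (maxRot r) x (w ++ [c])).dropLast ++ [!c]
      = body r (maxRot r) x (w ++ [!c]) := by
  rw [body_append, body_append]
  have hb : ∀ q c', body r (maxRot r) q [c'] = blk r (maxRot r) q c' := by
    intro q c'
    simp
  rw [hb, hb]
  conv_lhs => rw [blk_concat hLr hr (lastD x w) c]
  rw [← List.append_assoc, List.dropLast_concat, List.append_assoc,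
    blk_flip hLr hr (lastD x w) c]

omit hLs hs in
lemma body_flip' (x c : Bool) (w : List Bool) (hw : w.dropLast ++ [c] = w) :
    (body r (maxRot r) x w).dropLast ++ [!c]
      = body r (maxRot r) x (w.dropLast ++ [!c]) := by
  conv_lhs => rw [← hw]
  exact body_flip hLr hr x c w.dropLast

lemma substWord_body : substWord r s = body r (maxRot r) true s := by
  obtain ⟨hshd, _⟩ := lyndon_head_tail hLs hs
  conv_lhs => rw [hshd]
  rw [substWord_eq_body, ← hshd]
  rfl

lemma substWord_body_max :
    substWord r (maxRot s) = body r (maxRot r) false (maxRot s) := by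
  have hSgcons := maxRot_cons hLs hs
  conv_lhs => rw [hSgcons]
  rw [substWord_eq_body, ← hSgcons]
  rfl

lemma blk_subst (x y : Bool) :
    blk (substWord r s) (maxRot (substWord r s)) x y
      = body r (maxRot r) x (blk s (maxRot s) x y) := by
  obtain ⟨hshd, hslast⟩ := lyndon_head_tail hLs hs
  have hSglast := maxRot_getLast hLs hs
  have hW := substWord_body hLr hr hLs hs
  have hMR := maxRot_substWord hLr hr hLs hs
  have hMW := substWord_body_max hLr hr hLs hs
  cases x <;> cases y
  · show maxRot (substWord r s) = body r (maxRot r) false (maxRot s)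
    rw [hMR, hMW]
  · show (maxRot (substWord r s)).dropLast ++ [true]
      = body r (maxRot r) false ((maxRot s).dropLast ++ [true])
    rw [hMR, hMW]
    exact body_flip' hLr hr false false (maxRot s) hSglast
  · show (substWord r s).dropLast ++ [false]
      = body r (maxRot r) true (s.dropLast ++ [false])
    rw [hW]
    exact body_flip' hLr hr true true s hslast
  · exact hW

lemma chain (w : List Bool) (x : Bool) :
    body (substWord r s) (maxRot (substWord r s)) x w
      = body r (maxRot r) x (body s (maxRot s) x w) := by
  induction w generalizing x with
  | nil => rfl
  | cons y w ih =>
    simp only [body_cons]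
    rw [body_append]
    have hld : lastD x (blk s (maxRot s) x y) = y := by
      conv_lhs => rw [blk_concat hLs hs x y]
      exact lastD_concat _ _ _
    rw [hld, ← blk_subst hLr hr hLs hs x y, ih y]

end Main

/-- The substitution operator `•` on Lyndon words of length at least 2 is associative. -/
theorem stmt9 (r s t : List Bool) (hr : 2 ≤ r.length) (hs : 2 ≤ s.length)
    (ht : 2 ≤ t.length) (hLr : IsLyndon r) (hLs : IsLyndon s) (hLt : IsLyndon t) :
    substWord (substWord r s) t = substWord r (substWord s t) := by
  cases t with
  | nil => simp at ht
  | cons c t' =>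
    have hu : substWord s (c :: t') = body s (maxRot s) (!c) (c :: t') :=
      substWord_eq_body s c t'
    obtain ⟨z, hz⟩ := blk_shape hLs hs (!c) c
    have hu2 : substWord s (c :: t') = c :: (z ++ body s (maxRot s) c t') := by
      rw [hu, body_cons, hz, Bool.not_not]
      rfl
    rw [substWord_eq_body (substWord r s) c t']
    rw [hu2, substWord_eq_body r c _, ← hu2, hu]
    exact chain hLr hr hLs hs (c :: t') (!c)
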